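/- arXiv:2002.07052 — 5 statements merged into one kernel-verified Lean document; each statement's English description precedes it below -/
import Mathlib

section
/- Let Ω ⊆ ℂ be non-empty and closed, A ∈ ℂ^{n×n}. The minimum of ‖A − X‖_F² over all X ∈ ℂ^{n×n} with all eigenvalues in Ω equals the minimum over all unitary U ∈ U(n) of Σ_i d_Ω²((U*AU)_{ii}) + Σ_{i>j} |(U*AU)_{ij}|², where d_Ω²(z) = min_{x∈Ω} |z−x|². -/
open Matrix Module

/-!
Conjugating by a unitary `U` preserves both the Frobenius distance and the spectrum, so with
`B = Uᴴ A U` and `T = Uᴴ X U` we have `‖A - X‖_F = ‖B - T‖_F`. By Schur's theorem `U` can be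
chosen with `T` upper triangular, and then the diagonal of `T` is the spectrum of `X`. Splitting
`‖B - T‖_F²` into diagonal, strictly lower and strictly upper parts, the lower part does not
depend on `T`, the diagonal part is at least `∑ d_Ω²(B i i)`, and the upper part is nonnegative;
both bounds are attained by the triangular `T` that copies the upper part of `B` and puts nearest
points of `Ω` on the diagonal.
-/

theorem Fintype.sum_sum_eq_diag_add_lower_add_upper {α M : Type*} [Fintype α] [LinearOrder α]
    [AddCommMonoid M] (c : α → α → M) :
    ∑ i, ∑ j, c i j = ∑ i, c i i + ∑ i, ∑ j, (if j < i then c i j else 0) +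
      ∑ i, ∑ j, (if i < j then c i j else 0) := by
  have hsplit : ∀ i j, c i j = ((if j = i then c i j else 0) + (if j < i then c i j else 0)) +
      (if i < j then c i j else 0) := by
    intro i j
    rcases lt_trichotomy j i with h | rfl | h
    · simp [h, h.ne, h.not_gt]
    · simp
    · simp [h, h.ne', h.not_gt]
  simp only [← Finset.sum_add_distrib]
  refine Finset.sum_congr rfl fun i _ => ?_
  conv_lhs => rw [Finset.sum_congr rfl fun j _ => hsplit i j]
  simp only [Finset.sum_add_distrib, Finset.sum_ite_eq', Finset.mem_univ, if_true]

section Unitary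

variable {𝕜 ι : Type*} [RCLike 𝕜] [Fintype ι]

theorem Matrix.sum_sum_norm_sq_eq_re_trace (M : Matrix ι ι 𝕜) :
    ∑ i, ∑ j, ‖M i j‖ ^ 2 = RCLike.re (Mᴴ * M).trace := by
  simp only [trace, diag, mul_apply, conjTranspose_apply, map_sum, RCLike.star_def,
    RCLike.conj_mul]
  rw [Finset.sum_comm]
  norm_cast

variable [DecidableEq ι]

theorem Matrix.sum_sum_norm_sq_conjTranspose_mul_mul {U : Matrix ι ι 𝕜}
    (hU : U ∈ unitaryGroup ι 𝕜) (M : Matrix ι ι 𝕜) :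
    ∑ i, ∑ j, ‖(Uᴴ * M * U) i j‖ ^ 2 = ∑ i, ∑ j, ‖M i j‖ ^ 2 := by
  have hUUH : U * Uᴴ = 1 := mem_unitaryGroup_iff.mp hU
  simp only [sum_sum_norm_sq_eq_re_trace, conjTranspose_mul, conjTranspose_conjTranspose]
  congr 1
  calc (Uᴴ * (Mᴴ * U) * (Uᴴ * M * U)).trace = (Uᴴ * (Mᴴ * (U * Uᴴ) * M) * U).trace := by
        simp only [Matrix.mul_assoc]
    _ = (Mᴴ * M).trace := by
        rw [hUUH, Matrix.mul_one, trace_mul_cycle, ← Matrix.mul_assoc, hUUH, Matrix.one_mul]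

theorem Matrix.spectrum_conjTranspose_mul_mul {U : Matrix ι ι 𝕜} (hU : U ∈ unitaryGroup ι 𝕜)
    (X : Matrix ι ι 𝕜) : spectrum 𝕜 (Uᴴ * X * U) = spectrum 𝕜 X :=
  Unitary.spectrum_star_left_conjugate (U := ⟨U, hU⟩)

theorem Matrix.spectrum_mul_mul_conjTranspose {U : Matrix ι ι 𝕜} (hU : U ∈ unitaryGroup ι 𝕜)
    (X : Matrix ι ι 𝕜) : spectrum 𝕜 (U * X * Uᴴ) = spectrum 𝕜 X :=
  Unitary.spectrum_star_right_conjugate (U := ⟨U, hU⟩)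

theorem OrthonormalBasis.toMatrix_orthonormalBasis_conjTranspose {E : Type*}
    [NormedAddCommGroup E] [InnerProductSpace 𝕜 E] (a b : OrthonormalBasis ι 𝕜 E) :
    (a.toBasis.toMatrix b)ᴴ = b.toBasis.toMatrix a := by
  have h := a.toBasis.toMatrix_mul_toMatrix_flip b.toBasis
  simp only [OrthonormalBasis.coe_toBasis] at h
  calc (a.toBasis.toMatrix b)ᴴ
      = (a.toBasis.toMatrix b)ᴴ * (a.toBasis.toMatrix b * b.toBasis.toMatrix a) := by
        rw [h, Matrix.mul_one]
    _ = b.toBasis.toMatrix a := by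
        rw [← Matrix.mul_assoc, a.toMatrix_orthonormalBasis_conjTranspose_mul_self b,
          Matrix.one_mul]

theorem LinearMap.toMatrix_orthonormalBasis_toEuclideanLin
    (b : OrthonormalBasis ι 𝕜 (EuclideanSpace 𝕜 ι)) (X : Matrix ι ι 𝕜) :
    LinearMap.toMatrix b.toBasis b.toBasis (toEuclideanLin X) =
      ((EuclideanSpace.basisFun ι 𝕜).toBasis.toMatrix b)ᴴ * X *
        (EuclideanSpace.basisFun ι 𝕜).toBasis.toMatrix b := by
  rw [OrthonormalBasis.toMatrix_orthonormalBasis_conjTranspose,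
    ← basis_toMatrix_mul_linearMap_toMatrix_mul_basis_toMatrix (b := b.toBasis) (c := b.toBasis)
      (b' := (EuclideanSpace.basisFun ι 𝕜).toBasis) (c' := (EuclideanSpace.basisFun ι 𝕜).toBasis),
    toEuclideanLin_eq_toLin_orthonormal, LinearMap.toMatrix_toLin]
  simp

end Unitary

section Schur

theorem Orthonormal.fin_cons {𝕜 E : Type*} [RCLike 𝕜] [NormedAddCommGroup E]
    [InnerProductSpace 𝕜 E] {m : ℕ} {u : E} {v : Fin m → E} (hu : ‖u‖ = 1)
    (hv : Orthonormal 𝕜 v) (huv : ∀ i, inner 𝕜 u (v i) = 0) :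
    Orthonormal 𝕜 (Fin.cons u v : Fin (m + 1) → E) := by
  rw [orthonormal_iff_ite] at hv ⊢
  intro i j
  cases i using Fin.cases <;> cases j using Fin.cases
  · simp [inner_self_eq_norm_sq_to_K, hu]
  · simp [huv, (Fin.succ_ne_zero _).symm]
  · simp [inner_eq_zero_symm.mp (huv _), Fin.succ_ne_zero]
  · simp [hv, Fin.succ_inj]

theorem Module.End.exists_eigenvector_norm_eq_one {E : Type*} [NormedAddCommGroup E]
    [InnerProductSpace ℂ E] [FiniteDimensional ℂ E] [Nontrivial E] (f : E →ₗ[ℂ] E) :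
    ∃ (u : E) (μ : ℂ), ‖u‖ = 1 ∧ f u = μ • u := by
  obtain ⟨μ, hμ⟩ := Module.End.exists_eigenvalue f
  obtain ⟨v, hv⟩ := hμ.exists_hasEigenvector
  have hv0 : ‖v‖ ≠ 0 := norm_ne_zero_iff.mpr hv.2
  refine ⟨(‖v‖ : ℂ)⁻¹ • v, μ, ?_, ?_⟩
  · rw [norm_smul, norm_inv, Complex.norm_real, norm_norm, inv_mul_cancel₀ hv0]
  · rw [map_smul, hv.apply_eq_smul, smul_comm]

/-- Schur's theorem for operators. -/
theorem LinearMap.exists_orthonormalBasis_inner_eq_zero_of_lt {E : Type*} [NormedAddCommGroup E]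
    [InnerProductSpace ℂ E] [FiniteDimensional ℂ E] {m : ℕ} (hm : finrank ℂ E = m)
    (f : E →ₗ[ℂ] E) :
    ∃ b : OrthonormalBasis (Fin m) ℂ E, ∀ ⦃i j⦄, j < i → inner ℂ (b i) (f (b j)) = 0 := by
  induction m generalizing E with
  | zero => exact ⟨(stdOrthonormalBasis ℂ E).reindex (finCongr hm), fun i => i.elim0⟩
  | succ m ih =>
    have : Nontrivial E := nontrivial_of_finrank_eq_succ hm
    obtain ⟨u, μ, hu, hfu⟩ := Module.End.exists_eigenvector_norm_eq_one f
    have hK : finrank ℂ (ℂ ∙ u)ᗮ = m := by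
      have := Submodule.finrank_add_finrank_orthogonal (ℂ ∙ u)
      rw [finrank_span_singleton (norm_ne_zero_iff.mp (hu ▸ one_ne_zero)), hm] at this
      omega
    set K := (ℂ ∙ u)ᗮ
    -- Triangularize the compression of `f` to `uᗮ`, then put the eigenvector `u` in front.
    obtain ⟨b, hb⟩ := ih hK (K.orthogonalProjectionOnto.toLinearMap ∘ₗ f ∘ₗ K.subtype)
    have huK : ∀ i, inner ℂ u (b i : E) = 0 := fun i =>
      Submodule.mem_orthogonal_singleton_iff_inner_right.mp (b i).2
    have hw := Orthonormal.fin_cons hu (b.orthonormal.comp_linearIsometry K.subtypeₗᵢ) huK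
    refine ⟨OrthonormalBasis.mk hw
      (hw.linearIndependent.span_eq_top_of_card_eq_finrank (by simp [hm])).ge, ?_⟩
    intro i j hij
    rw [OrthonormalBasis.coe_mk]
    obtain ⟨i, rfl⟩ := Fin.exists_succ_eq.mpr (Fin.ne_zero_of_lt hij)
    cases j using Fin.cases with
    | zero => simp [hfu, inner_eq_zero_symm.mp (huK i)]
    | succ j => simpa using hb (Fin.succ_lt_succ_iff.mp hij)

theorem Matrix.exists_mem_unitaryGroup_isUpperTriangular {n : ℕ}
    (X : Matrix (Fin n) (Fin n) ℂ) :
    ∃ U ∈ unitaryGroup (Fin n) ℂ, (Uᴴ * X * U).IsUpperTriangular := by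
  obtain ⟨b, hb⟩ := LinearMap.exists_orthonormalBasis_inner_eq_zero_of_lt
    finrank_euclideanSpace_fin (toEuclideanLin X)
  refine ⟨_, (EuclideanSpace.basisFun (Fin n) ℂ).toMatrix_orthonormalBasis_mem_unitary b, ?_⟩
  intro i j hij
  rw [← LinearMap.toMatrix_orthonormalBasis_toEuclideanLin, LinearMap.toMatrix_apply,
    OrthonormalBasis.coe_toBasis_repr_apply, OrthonormalBasis.coe_toBasis, b.repr_apply_apply]
  exact hb hij

end Schur

namespace Matrix

variable {ι : Type*} [Fintype ι] [LinearOrder ι]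

theorem spectrum_eq_range_diag_of_isUpperTriangular {K : Type*} [Field K] [DecidableEq ι]
    {T : Matrix ι ι K} (hT : T.IsUpperTriangular) : spectrum K T = Set.range T.diag := by
  ext z
  rw [mem_spectrum_iff_isRoot_charpoly, charpoly_of_isUpperTriangular T hT,
    Polynomial.IsRoot, Polynomial.eval_prod, Finset.prod_eq_zero_iff]
  simp [sub_eq_zero, eq_comm]

/-- The squared Frobenius distance from `B` to the upper triangular matrices with diagonal in
`Ω`. -/
noncomputable def triangularDistSq (Ω : Set ℂ) (B : Matrix ι ι ℂ) : ℝ :=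
  ∑ i, Metric.infDist (B i i) Ω ^ 2 + ∑ i, ∑ j, (if j < i then ‖B i j‖ ^ 2 else 0)

theorem sum_sum_norm_sub_sq_of_isUpperTriangular (B : Matrix ι ι ℂ) {T : Matrix ι ι ℂ}
    (hT : T.IsUpperTriangular) :
    ∑ i, ∑ j, ‖B i j - T i j‖ ^ 2 = ∑ i, ‖B i i - T i i‖ ^ 2 +
      ∑ i, ∑ j, (if j < i then ‖B i j‖ ^ 2 else 0) +
      ∑ i, ∑ j, (if i < j then ‖B i j - T i j‖ ^ 2 else 0) := by
  rw [Fintype.sum_sum_eq_diag_add_lower_add_upper]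
  congr 3 with i
  refine Finset.sum_congr rfl fun j _ => ?_
  split_ifs with hji
  · rw [hT hji, sub_zero]
  · rfl

theorem triangularDistSq_le (Ω : Set ℂ) (B : Matrix ι ι ℂ) {T : Matrix ι ι ℂ}
    (hT : T.IsUpperTriangular) (hTΩ : ∀ i, T i i ∈ Ω) :
    triangularDistSq Ω B ≤ ∑ i, ∑ j, ‖B i j - T i j‖ ^ 2 := by
  rw [sum_sum_norm_sub_sq_of_isUpperTriangular B hT, triangularDistSq]
  have hdiag : ∑ i, Metric.infDist (B i i) Ω ^ 2 ≤ ∑ i, ‖B i i - T i i‖ ^ 2 := by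
    gcongr with i
    · exact Metric.infDist_nonneg
    · rw [← Complex.dist_eq]
      exact Metric.infDist_le_dist_of_mem (hTΩ i)
  have hupper : 0 ≤ ∑ i, ∑ j, (if i < j then ‖B i j - T i j‖ ^ 2 else 0) := by
    positivity
  linarith

theorem exists_triangular_eq_triangularDistSq {Ω : Set ℂ} (hΩne : Ω.Nonempty)
    (hΩcl : IsClosed Ω) (B : Matrix ι ι ℂ) :
    ∃ T : Matrix ι ι ℂ, T.IsUpperTriangular ∧ (∀ i, T i i ∈ Ω) ∧
      ∑ i, ∑ j, ‖B i j - T i j‖ ^ 2 = triangularDistSq Ω B := by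
  choose t htΩ htdist using fun i => hΩcl.exists_infDist_eq_dist hΩne (B i i)
  let T : Matrix ι ι ℂ := of fun i j => if i = j then t i else if i < j then B i j else 0
  have hT : T.IsUpperTriangular := fun i j (hji : j < i) => by simp [T, hji.ne', hji.not_gt]
  refine ⟨T, hT, fun i => by simpa [T] using htΩ i, ?_⟩
  rw [sum_sum_norm_sub_sq_of_isUpperTriangular B hT, triangularDistSq]
  have hupper : ∑ i, ∑ j, (if i < j then ‖B i j - T i j‖ ^ 2 else 0) = 0 :=
    Finset.sum_eq_zero fun i _ => Finset.sum_eq_zero fun j _ => by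
      split_ifs with hij
      · simp [T, hij, hij.ne]
      · rfl
  rw [hupper]
  simp [T, htdist, Complex.dist_eq]

end Matrix

/-- The minimal squared Frobenius distance from A to the Ω-stable matrices equals the
minimum over unitary U of the sum of squared distances of the diagonal of U*AU to Ω
plus the squared norms of the strictly lower triangular entries. -/
theorem stmt_1 (n : ℕ) (Ω : Set ℂ) (hΩne : Ω.Nonempty) (hΩcl : IsClosed Ω)
    (A : Matrix (Fin n) (Fin n) ℂ) :
    sInf {d : ℝ | ∃ X : Matrix (Fin n) (Fin n) ℂ, spectrum ℂ X ⊆ Ω ∧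
        d = ∑ i, ∑ j, ‖A i j - X i j‖ ^ 2} =
    sInf {d : ℝ | ∃ U ∈ Matrix.unitaryGroup (Fin n) ℂ,
        d = (∑ i, (Metric.infDist (((Uᴴ : Matrix (Fin n) (Fin n) ℂ) * A * U) i i) Ω) ^ 2) +
            ∑ i, ∑ j, (if j < i then
              ‖((Uᴴ : Matrix (Fin n) (Fin n) ℂ) * A * U) i j‖ ^ 2 else 0)} := by
  have hconj : ∀ {U} (X : Matrix (Fin n) (Fin n) ℂ), U ∈ unitaryGroup (Fin n) ℂ →
      ∑ i, ∑ j, ‖(Uᴴ * A * U) i j - (Uᴴ * X * U) i j‖ ^ 2 = ∑ i, ∑ j, ‖A i j - X i j‖ ^ 2 :=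
    fun X hU => by
      simpa [Matrix.mul_sub, Matrix.sub_mul] using sum_sum_norm_sq_conjTranspose_mul_mul hU (A - X)
  apply csInf_eq_csInf_of_forall_exists_le
  · rintro _ ⟨X, hXΩ, rfl⟩
    obtain ⟨U, hU, hT⟩ := exists_mem_unitaryGroup_isUpperTriangular X
    have hTΩ : ∀ i, (Uᴴ * X * U) i i ∈ Ω := fun i => hXΩ <| by
      rw [← spectrum_conjTranspose_mul_mul hU, spectrum_eq_range_diag_of_isUpperTriangular hT]
      exact ⟨i, rfl⟩
    exact ⟨_, ⟨U, hU, rfl⟩, hconj X hU ▸ triangularDistSq_le Ω _ hT hTΩ⟩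
  · rintro _ ⟨U, hU, rfl⟩
    obtain ⟨T, hT, hTΩ, hTdist⟩ := exists_triangular_eq_triangularDistSq hΩne hΩcl (Uᴴ * A * U)
    have hUTU : Uᴴ * (U * T * Uᴴ) * U = T := by
      have h : Uᴴ * U = 1 := mem_unitaryGroup_iff'.mp hU
      rw [← Matrix.mul_assoc, ← Matrix.mul_assoc, h, Matrix.one_mul, Matrix.mul_assoc, h,
        Matrix.mul_one]
    refine ⟨_, ⟨U * T * Uᴴ, ?_, rfl⟩, ?_⟩
    · rw [spectrum_mul_mul_conjTranspose hU, spectrum_eq_range_diag_of_isUpperTriangular hT]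
      rintro _ ⟨i, rfl⟩
      exact hTΩ i
    · rw [← hconj _ hU, hUTU, hTdist]
      rfl
end

section
/- Let A ∈ ℝ^{2×2} with A_{11} = A_{22}, and let B ∈ ℝ^{2×2} be a Hurwitz stable matrix minimizing ‖A − B‖_F over all Hurwitz stable 2×2 real matrices. Then B_{11} = B_{22}. -/
open Matrix BigOperators

/-- If A has equal diagonal entries and B is a nearest Hurwitz stable 2×2 real matrix
to A (in Frobenius norm), then B has equal diagonal entries. -/
theorem stmt_6 (A B : Matrix (Fin 2) (Fin 2) ℝ)
    (hA : A 0 0 = A 1 1)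
    (hBstab : B.trace ≤ 0 ∧ 0 ≤ B.det)
    (hBmin : ∀ X : Matrix (Fin 2) (Fin 2) ℝ, X.trace ≤ 0 → 0 ≤ X.det →
      ∑ i, ∑ j, (A i j - B i j) ^ 2 ≤ ∑ i, ∑ j, (A i j - X i j) ^ 2) :
    B 0 0 = B 1 1 := by
  set m : ℝ := (B 0 0 + B 1 1) / 2 with hm
  set X : Matrix (Fin 2) (Fin 2) ℝ := !![m, B 0 1; B 1 0, m] with hX
  have htrB : B.trace = B 0 0 + B 1 1 := by simp [Matrix.trace_fin_two]
  have hdetB : B.det = B 0 0 * B 1 1 - B 0 1 * B 1 0 := by simp [Matrix.det_fin_two]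
  have htr : X.trace ≤ 0 := by
    simp [hX, Matrix.trace_fin_two]
    linarith [hBstab.1, htrB ▸ hBstab.1]
  have hdet : 0 ≤ X.det := by
    have h2 := hBstab.2
    rw [hdetB] at h2
    simp [hX, Matrix.det_fin_two]
    nlinarith [sq_nonneg (B 0 0 - B 1 1)]
  have h := hBmin X htr hdet
  simp [Fin.sum_univ_two, hX] at h
  rw [hm] at h
  nlinarith [h, hA, sq_nonneg (B 0 0 - B 1 1)]
end

section
/- Let B ∈ ℝ^{2×2} be Hurwitz stable (trace(B) ≤ 0, det(B) ≥ 0) with B = [[α+δ,β],[γ,α−δ]]. Then B̂ = [[α,β],[γ,α]] is also Hurwitz stable, and for any A with A_{11}=A_{22}, ‖A − B‖_F² = ‖A − B̂‖_F² + 2δ². -/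
open Matrix BigOperators

/-- If B = [[α+δ,β],[γ,α−δ]] is Hurwitz stable (trace ≤ 0, det ≥ 0) then
B̂ = [[α,β],[γ,α]] is Hurwitz stable, and for any A with equal diagonal entries
‖A − B‖_F² = ‖A − B̂‖_F² + 2δ². -/
theorem stmt_7 (α β γ δ : ℝ)
    (B Bh : Matrix (Fin 2) (Fin 2) ℝ)
    (hB : B = !![α + δ, β; γ, α - δ])
    (hBh : Bh = !![α, β; γ, α])
    (hstab : B.trace ≤ 0 ∧ 0 ≤ B.det) :
    (Bh.trace ≤ 0 ∧ 0 ≤ Bh.det) ∧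
    ∀ A : Matrix (Fin 2) (Fin 2) ℝ, A 0 0 = A 1 1 →
      ∑ i, ∑ j, (A i j - B i j) ^ 2 =
        (∑ i, ∑ j, (A i j - Bh i j) ^ 2) + 2 * δ ^ 2 := by
  obtain ⟨ht, hd⟩ := hstab
  subst hB hBh
  simp [Matrix.trace_fin_two, Matrix.det_fin_two] at ht hd ⊢
  constructor
  · constructor
    · linarith
    · nlinarith [sq_nonneg δ]
  · intro A h
    simp [Fin.sum_univ_two, h]
    ring
end

section
/- Let A ∈ ℝ^{2×2} and let B be a nearest Hurwitz stable matrix to A in Frobenius norm. If trace(B) = 0 and det(B) = 0 and additionally B_{11} = B_{22} (which can be assumed after an orthogonal change of basis making A_{11} = A_{22}), then B equals either [[0, A_{12}],[0,0]] or [[0,0],[A_{21},0]]. -/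
open Matrix BigOperators

/-- If B is a nearest Hurwitz stable matrix to A with trace B = 0, det B = 0 and equal
diagonal entries, then B = [[0,A₁₂],[0,0]] or B = [[0,0],[A₂₁,0]]. -/
theorem stmt_12 (A B : Matrix (Fin 2) (Fin 2) ℝ)
    (hBstab : B.trace ≤ 0 ∧ 0 ≤ B.det)
    (hBmin : ∀ X : Matrix (Fin 2) (Fin 2) ℝ, X.trace ≤ 0 → 0 ≤ X.det →
      ∑ i, ∑ j, (A i j - B i j) ^ 2 ≤ ∑ i, ∑ j, (A i j - X i j) ^ 2)
    (htr : B.trace = 0) (hdet : B.det = 0) (hdiag : B 0 0 = B 1 1) :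
    B = !![0, A 0 1; 0, 0] ∨ B = !![0, 0; A 1 0, 0] := by
  rw [Matrix.trace_fin_two] at htr
  rw [Matrix.det_fin_two] at hdet
  have h00 : B 0 0 = 0 := by linarith
  have h11 : B 1 1 = 0 := by linarith
  have hd : B 0 1 * B 1 0 = 0 := by nlinarith
  rcases mul_eq_zero.mp hd with h01 | h10
  · right
    have hX := hBmin !![0,0;A 1 0,0]
      (by simp [Matrix.trace_fin_two]) (by simp [Matrix.det_fin_two])
    simp only [Fin.sum_univ_two, Matrix.cons_val', Matrix.cons_val_zero, Matrix.cons_val_one, Matrix.of_apply, Matrix.cons_val_fin_one,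
      Matrix.head_cons, Matrix.head_fin_const, Matrix.empty_val', Matrix.cons_val_fin_one] at hX
    rw [h00, h01, h11] at hX
    have h2 : (A 1 0 - B 1 0) ^ 2 = 0 := le_antisymm (by linarith [sq_nonneg (A 1 0 - B 1 0)]) (sq_nonneg _)
    have hB10 : B 1 0 = A 1 0 := by
      have := pow_eq_zero_iff (n := 2) (by norm_num) |>.mp h2
      linarith [sub_eq_zero.mp this]
    ext i j
    fin_cases i <;> fin_cases j <;> simp [h00, h11, h01, hB10]
  · left
    have hX := hBmin !![0,A 0 1;0,0]
      (by simp [Matrix.trace_fin_two]) (by simp [Matrix.det_fin_two])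
    simp only [Fin.sum_univ_two, Matrix.cons_val', Matrix.cons_val_zero, Matrix.cons_val_one, Matrix.of_apply, Matrix.cons_val_fin_one,
      Matrix.head_cons, Matrix.head_fin_const, Matrix.empty_val', Matrix.cons_val_fin_one] at hX
    rw [h00, h10, h11] at hX
    have h2 : (A 0 1 - B 0 1) ^ 2 = 0 := le_antisymm (by linarith [sq_nonneg (A 0 1 - B 0 1)]) (sq_nonneg _)
    have hB01 : B 0 1 = A 0 1 := by
      have := pow_eq_zero_iff (n := 2) (by norm_num) |>.mp h2
      linarith [sub_eq_zero.mp this]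
    ext i j
    fin_cases i <;> fin_cases j <;> simp [h00, h11, h10, hB01]
end

section
/- Let Ω ⊆ ℝ^N be non-empty and closed and let z ∈ ℝ^N be a point at which the nearest point p_Ω(z) ∈ Ω is unique. Then the squared distance function d_Ω²(x) = min_{y∈Ω} ‖x−y‖² is differentiable at z with gradient ∇d_Ω²(z) = 2(z − p_Ω(z)). -/
/-!
Write `x = z + h` and let `q` be a nearest point of `Ω` to `x`. Expanding
`d²(x) = ‖x - q‖² ≤ ‖x - p‖²` around `z` and using `‖z - q‖ ≥ ‖z - p‖ = d(z)` gives
`d²(x) - d²(z) - 2⟪z - p, h⟫ ∈ [‖h‖² + 2⟪h, p - q⟫, ‖h‖²]`, so the remainder is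
`o(‖h‖)` as soon as `q → p`. That holds because nearest points depend continuously on the
base point wherever the nearest point is unique: in a proper space, nearest points of
nearby base points stay in a compact set on which `dist z ·` exceeds `d(z)` away from `p`.
-/

open Metric Filter Topology
open scoped RealInnerProductSpace

section NearestPoint

variable {α : Type*} [PseudoMetricSpace α] {s : Set α} {x z p q : α}

theorem Metric.infDist_eq_dist_of_forall_dist_le (hp : p ∈ s)
    (h : ∀ y ∈ s, dist z p ≤ dist z y) : infDist z s = dist z p :=
  le_antisymm (infDist_le_dist_of_mem hp) ((le_infDist ⟨p, hp⟩).2 h)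

theorem Metric.dist_le_of_infDist_eq_dist (hp : p ∈ s) (hxq : infDist x s = dist x q) :
    dist z q ≤ 2 * dist x z + dist z p := by
  have hxp : infDist x s ≤ dist x p := infDist_le_dist_of_mem hp
  linarith [dist_triangle z x q, dist_triangle x z p, dist_comm z x]

theorem Metric.eventually_dist_nearest_lt [ProperSpace α] (hs : IsClosed s) (hp : p ∈ s)
    (huniq : ∀ y ∈ s, y ≠ p → dist z p < dist z y) {ε : ℝ} (hε : 0 < ε) :
    ∀ᶠ x in 𝓝 z, ∀ q ∈ s, infDist x s = dist x q → dist q p < ε := by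
  set K := (s ∩ closedBall z (dist z p + 1)) \ ball p ε
  have hK : IsCompact K :=
    (isCompact_closedBall z _).of_isClosed_subset
      ((hs.inter isClosed_closedBall).sdiff isOpen_ball) fun y hy => hy.1.2
  obtain ⟨m, hpm, hm⟩ := hK.exists_forall_le' (continuous_const.dist continuous_id).continuousOn
    fun y hy => huniq y hy.1.1 fun hyp => hy.2 (hyp ▸ mem_ball_self hε)
  have hη : 0 < min 1 (m - dist z p) := lt_min one_pos (sub_pos.2 hpm)
  filter_upwards [ball_mem_nhds z (half_pos hη)] with x hx q hq hxq
  rw [mem_ball] at hx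
  by_contra! hqp
  have hzq := dist_le_of_infDist_eq_dist (z := z) hp hxq
  have hqK : q ∈ K :=
    ⟨⟨hq, mem_closedBall'.2 (by linarith [min_le_left 1 (m - dist z p)])⟩,
      fun h => (mem_ball.1 h).not_ge hqp⟩
  have hmq : m ≤ dist z q := hm q hqK
  linarith [min_le_right 1 (m - dist z p)]

end NearestPoint

section SquaredDistance

variable {E : Type*} [NormedAddCommGroup E] [InnerProductSpace ℝ E] {s : Set E} {x z p q : E}

theorem Metric.abs_infDist_sq_sub_sub_inner_le (hp : p ∈ s) (hzp : infDist z s = dist z p)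
    (hq : q ∈ s) (hxq : infDist x s = dist x q) :
    |infDist x s ^ 2 - infDist z s ^ 2 - ⟪(2 : ℝ) • (z - p), x - z⟫|
      ≤ ‖x - z‖ * (‖x - z‖ + 2 * dist p q) := by
  have hxp : infDist x s ^ 2 ≤ ‖(x - z) + (z - p)‖ ^ 2 := by
    rw [sub_add_sub_cancel, ← dist_eq_norm]
    exact pow_le_pow_left₀ infDist_nonneg (infDist_le_dist_of_mem hp) 2
  have hpq : ‖z - p‖ ^ 2 ≤ ‖z - q‖ ^ 2 := by
    rw [← dist_eq_norm, ← dist_eq_norm, ← hzp]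
    exact pow_le_pow_left₀ infDist_nonneg (infDist_le_dist_of_mem hq) 2
  have hxq' : infDist x s ^ 2 = ‖(x - z) + (z - q)‖ ^ 2 := by
    rw [sub_add_sub_cancel, hxq, dist_eq_norm]
  have hsplit : ⟪x - z, z - q⟫ = ⟪x - z, z - p⟫ + ⟪x - z, p - q⟫ := by
    rw [← inner_add_right, sub_add_sub_cancel]
  have hcs := abs_le.1 (abs_real_inner_le_norm (x - z) (p - q))
  rw [norm_add_sq_real] at hxp hxq'
  rw [hzp, dist_eq_norm, real_inner_smul_left, real_inner_comm, dist_eq_norm, abs_le]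
  constructor <;> nlinarith [norm_nonneg (x - z)]

end SquaredDistance

theorem stmt_18_general (N : ℕ) (Ω : Set (EuclideanSpace ℝ (Fin N)))
    (hΩcl : IsClosed Ω)
    (z p : EuclideanSpace ℝ (Fin N)) (hp : p ∈ Ω)
    (huniq : ∀ y ∈ Ω, y ≠ p → ‖z - p‖ < ‖z - y‖) :
    HasGradientAt (fun x => (Metric.infDist x Ω) ^ 2) ((2 : ℝ) • (z - p)) z := by
  have huniq' : ∀ y ∈ Ω, y ≠ p → dist z p < dist z y := by
    simpa only [dist_eq_norm] using huniq
  have hzp : infDist z Ω = dist z p := infDist_eq_dist_of_forall_dist_le hp fun y hy => by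
    rcases eq_or_ne y p with rfl | hyp
    exacts [le_rfl, (huniq' y hy hyp).le]
  rw [hasGradientAt_iff_isLittleO, Asymptotics.isLittleO_iff]
  intro c hc
  filter_upwards [eventually_dist_nearest_lt hΩcl hp huniq' (by positivity : 0 < c / 4),
    ball_mem_nhds z (half_pos hc)] with x hnear hx
  obtain ⟨q, hq, hxq⟩ := hΩcl.exists_infDist_eq_dist ⟨p, hp⟩ x
  have hqp : dist p q < c / 4 := dist_comm p q ▸ hnear q hq hxq
  rw [mem_ball, dist_eq_norm] at hx
  calc _ ≤ ‖x - z‖ * (‖x - z‖ + 2 * dist p q) :=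
        abs_infDist_sq_sub_sub_inner_le hp hzp hq hxq
    _ ≤ ‖x - z‖ * c := by gcongr; linarith
    _ = c * ‖x - z‖ := mul_comm _ _

/-- If the nearest point p of a nonempty closed set Ω ⊆ ℝ^N to z is unique, then the
squared distance function x ↦ d_Ω(x)² is differentiable at z with gradient
2(z − p). -/
theorem stmt_18 (N : ℕ) (Ω : Set (EuclideanSpace ℝ (Fin N)))
    (hΩne : Ω.Nonempty) (hΩcl : IsClosed Ω)
    (z p : EuclideanSpace ℝ (Fin N)) (hp : p ∈ Ω)
    (hnear : ∀ y ∈ Ω, ‖z - p‖ ≤ ‖z - y‖)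
    (huniq : ∀ y ∈ Ω, y ≠ p → ‖z - p‖ < ‖z - y‖) :
    HasGradientAt (fun x => (Metric.infDist x Ω) ^ 2) ((2 : ℝ) • (z - p)) z :=
  stmt_18_general N Ω hΩcl z p hp huniq
end
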